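/- For all 1 ≤ i ≠ k ≤ n and all f ∈ P⁻, the commutator of r_{i,k} and τ_i satisfies (x_i² − x_k²)·(r_{i,k}(τ_i(f)) − τ_i(r_{i,k}(f))) = x_i·s_{i,k}(τ_i(f) + τ_k(f)) − x_k·s_{i,k}(τ_i(f) − τ_k(f)) − 2 x_i·f; equivalently, x_i^{−1}[r_{i,k}, τ_i] = (x_i² − x_k²)^{−1}(s_{i,k}(τ_i + τ_k) − x_i^{−1} x_k s_{i,k}(τ_i − τ_k) − 2). -/

import Mathlib

noncomputable section

/-- The defining relations of the skew polynomial ring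
`P⁻ = ℂ⟨x₁,…,xₙ⟩/⟨xᵢxⱼ + xⱼxᵢ : i ≠ j⟩`. -/
inductive SkewRel (n : ℕ) : FreeAlgebra ℂ (Fin n) → FreeAlgebra ℂ (Fin n) → Prop
  | anticomm (i j : Fin n) (h : i ≠ j) :
      SkewRel n (FreeAlgebra.ι ℂ i * FreeAlgebra.ι ℂ j)
        (-(FreeAlgebra.ι ℂ j * FreeAlgebra.ι ℂ i))

/-- The skew polynomial ring `P⁻`. -/
abbrev SkewPoly (n : ℕ) := RingQuot (SkewRel n)

/-- The generators `xᵢ` of `P⁻`. -/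
def X {n : ℕ} (i : Fin n) : SkewPoly n :=
  RingQuot.mkAlgHom ℂ (SkewRel n) (FreeAlgebra.ι ℂ i)

/-- `f ∈ P⁻` is homogeneous of degree `d`: it lies in the span of the degree-`d` monomials. -/
def IsHomog {n : ℕ} (d : ℕ) (f : SkewPoly n) : Prop :=
  f ∈ Submodule.span ℂ
    {m : SkewPoly n | ∃ w : List (Fin n), w.length = d ∧ m = (w.map X).prod}

/-- The operator of left multiplication by `xᵢ` on `P⁻`. -/
def mulX {n : ℕ} (i : Fin n) : Module.End ℂ (SkewPoly n) :=
  LinearMap.mulLeft ℂ (X i)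

/-! Let `D f` be the left-hand side minus the right-hand side. `D` is `ℂ`-linear and `D 1 = 0`.
For a generator `x_j`, the Leibniz rule gives `r(x_j g) = ∂(x_{s j}) s(g) − x_j r(g)`, and
`τᵢ ∘ s_{i,k} = s_{i,k} ∘ τ_k`; since `x_i² − x_k²` is central and the generators anticommute,
this yields `D(x_j g) = −τᵢ(x_j) D(g)` in each of the cases `j = i`, `j = k`, `j ∉ {i, k}`.
Hence `D` vanishes on every monomial, so `D = 0`. -/

section AnticommutingElements

variable {R : Type*} [Ring R]

theorem commute_sq_of_mul_eq_neg {a b : R} (h : a * b = -(b * a)) : Commute a (b ^ 2) := by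
  rw [Commute, SemiconjBy]
  linear_combination (norm := noncomm_ring) h * b - b * h

end AnticommutingElements

namespace SkewPoly

variable {n : ℕ}

theorem X_mul_X_of_ne {a b : Fin n} (h : a ≠ b) : X a * X b = -(X b * X a) := by
  simpa only [map_mul, map_neg, X] using RingQuot.mkAlgHom_rel ℂ (SkewRel.anticomm a b h)

theorem algHom_ext {B : Type*} [Semiring B] [Algebra ℂ B] {φ ψ : SkewPoly n →ₐ[ℂ] B}
    (h : ∀ j, φ (X j) = ψ (X j)) : φ = ψ :=
  RingQuot.ringQuot_ext' ℂ _ _ (FreeAlgebra.hom_ext (funext h))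

theorem eq_top_of_one_mem_of_X_mul_mem (p : Submodule ℂ (SkewPoly n)) (h1 : 1 ∈ p)
    (hX : ∀ j, ∀ g ∈ p, X j * g ∈ p) : p = ⊤ := by
  suffices H : ∀ f, ∀ g ∈ p, f * g ∈ p from
    Submodule.eq_top_iff'.mpr fun f => mul_one f ▸ H f 1 h1
  intro f
  obtain ⟨a, rfl⟩ := RingQuot.mkAlgHom_surjective ℂ (SkewRel n) f
  induction a using FreeAlgebra.induction with
  | grade0 c => intro g hg; rw [AlgHom.commutes, ← Algebra.smul_def]; exact p.smul_mem c hg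
  | grade1 j => exact hX j
  | mul a b ha hb => intro g hg; rw [map_mul, mul_assoc]; exact ha _ (hb g hg)
  | add a b ha hb => intro g hg; rw [map_add, add_mul]; exact p.add_mem (ha g hg) (hb g hg)

theorem isHomog_one : IsHomog 0 (1 : SkewPoly n) :=
  Submodule.subset_span ⟨[], rfl, rfl⟩

theorem isHomog_X (j : Fin n) : IsHomog 1 (X j) :=
  Submodule.subset_span ⟨[j], rfl, by simp⟩

end SkewPoly

section CommutatorDefect

variable {A : Type*} [Ring A] [Algebra ℂ A] (xi xk : A) (s τi τk : A →ₐ[ℂ] A)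
  (r : Module.End ℂ A)

def commutatorDefect : Module.End ℂ A :=
  LinearMap.mulLeft ℂ (xi ^ 2 - xk ^ 2) ∘ₗ (r ∘ₗ τi.toLinearMap - τi.toLinearMap ∘ₗ r)
    - (LinearMap.mulLeft ℂ xi ∘ₗ s.toLinearMap ∘ₗ (τi.toLinearMap + τk.toLinearMap)
      - LinearMap.mulLeft ℂ xk ∘ₗ s.toLinearMap ∘ₗ (τi.toLinearMap - τk.toLinearMap)
      - LinearMap.mulLeft ℂ (2 * xi))

theorem commutatorDefect_apply (f : A) :
    commutatorDefect xi xk s τi τk r f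
      = (xi ^ 2 - xk ^ 2) * (r (τi f) - τi (r f))
        - (xi * s (τi f + τk f) - xk * s (τi f - τk f) - 2 * (xi * f)) := by
  simp [commutatorDefect]

theorem commutatorDefect_one (hr : r 1 = 0) : commutatorDefect xi xk s τi τk r 1 = 0 := by
  rw [commutatorDefect_apply]
  simp only [map_one, hr, map_zero, map_add, sub_self]
  noncomm_ring

variable {xi xk s τi τk r}

theorem commutatorDefect_xi_mul (hik : xi * xk = -(xk * xi)) (hτi : τi xi = -xi)
    (hτk : τk xi = xi) (hs : s xi = xk) (hτs : ∀ g, τi (s g) = s (τk g))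
    (hr : ∀ g, r (xi * g) = s g - xi * r g) (g : A) :
    commutatorDefect xi xk s τi τk r (xi * g) = -(τi xi * commutatorDefect xi xk s τi τk r g) := by
  have hc : Commute xi (xi ^ 2 - xk ^ 2) :=
    ((Commute.refl xi).pow_right 2).sub_right (commute_sq_of_mul_eq_neg hik)
  simp only [commutatorDefect_apply, map_mul, map_add, map_sub, map_neg, hτi, hτk, hs, hr, hτs,
    neg_mul]
  linear_combination (norm := noncomm_ring) -hc.eq * (r (τi g) - τi (r g))

theorem commutatorDefect_xk_mul (hik : xi * xk = -(xk * xi)) (hτi : τi xk = xk)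
    (hτk : τk xk = -xk) (hs : s xk = xi) (hτs : ∀ g, τi (s g) = s (τk g))
    (hr : ∀ g, r (xk * g) = s g - xk * r g) (g : A) :
    commutatorDefect xi xk s τi τk r (xk * g) = -(τi xk * commutatorDefect xi xk s τi τk r g) := by
  have hki : xk * xi = -(xi * xk) := by rw [hik, neg_neg]
  have hc : Commute xk (xi ^ 2 - xk ^ 2) :=
    (commute_sq_of_mul_eq_neg hki).sub_right ((Commute.refl xk).pow_right 2)
  simp only [commutatorDefect_apply, map_mul, map_add, map_sub, map_neg, hτi, hτk, hs, hr, hτs,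
    neg_mul]
  linear_combination (norm := noncomm_ring) hc.eq * (r (τi g) - τi (r g)) + 2 * hik * g

theorem commutatorDefect_mul_of_anticomm {y : A} (hyi : y * xi = -(xi * y))
    (hyk : y * xk = -(xk * y)) (hτi : τi y = y) (hτk : τk y = y) (hs : s y = y)
    (hr : ∀ g, r (y * g) = -(y * r g)) (g : A) :
    commutatorDefect xi xk s τi τk r (y * g) = -(τi y * commutatorDefect xi xk s τi τk r g) := by
  have hc : Commute y (xi ^ 2 - xk ^ 2) :=
    (commute_sq_of_mul_eq_neg hyi).sub_right (commute_sq_of_mul_eq_neg hyk)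
  simp only [commutatorDefect_apply, map_mul, map_add, map_sub, map_neg, hτi, hτk, hs, hr]
  linear_combination (norm := noncomm_ring) hc.eq * (r (τi g) - τi (r g))
    - hyi * (s (τi g) + s (τk g)) + hyk * (s (τi g) - s (τk g)) + 2 * hyi * g

end CommutatorDefect

namespace SkewPoly

section OddDividedDifference

variable {n : ℕ}

def IsTwistedOddDerivation (s : SkewPoly n →ₐ[ℂ] SkewPoly n) (pd : Module.End ℂ (SkewPoly n)) :
    Prop :=
  ∀ (d : ℕ) (f g : SkewPoly n), IsHomog d f →
    pd (f * g) = pd f * g + (-1 : ℂ) ^ d • (s f * pd g)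

variable {s : SkewPoly n →ₐ[ℂ] SkewPoly n} {pd : Module.End ℂ (SkewPoly n)}

theorem IsTwistedOddDerivation.map_one_eq_zero (hpd : IsTwistedOddDerivation s pd) : pd 1 = 0 := by
  have h := hpd 0 1 1 isHomog_one
  simp only [mul_one, map_one s, pow_zero, one_smul, one_mul] at h
  exact left_eq_add.mp h

theorem IsTwistedOddDerivation.map_X_mul (hpd : IsTwistedOddDerivation s pd) (j : Fin n)
    (g : SkewPoly n) : pd (X j * g) = pd (X j) * g - s (X j) * pd g := by
  rw [hpd 1 _ _ (isHomog_X j)]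
  module

theorem IsTwistedOddDerivation.map_swap_X_mul (hpd : IsTwistedOddDerivation s pd) {i k : Fin n}
    (hs : ∀ j, s (X j) = X (Equiv.swap i k j)) (j : Fin n) (g : SkewPoly n) :
    pd (s (X j * g)) = pd (X (Equiv.swap i k j)) * s g - X j * pd (s g) := by
  rw [map_mul, hs, hpd.map_X_mul, hs, Equiv.swap_apply_self]

end OddDividedDifference

theorem commutatorDefect_X_mul {n : ℕ} {i k : Fin n} (hik : i ≠ k)
    {s τi τk : SkewPoly n →ₐ[ℂ] SkewPoly n} {pd r : Module.End ℂ (SkewPoly n)}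
    (hs : ∀ j, s (X j) = X (Equiv.swap i k j))
    (hτi : ∀ j, τi (X j) = if j = i then -X j else X j)
    (hτk : ∀ j, τk (X j) = if j = k then -X j else X j)
    (hpdi : pd (X i) = 1) (hpdk : pd (X k) = 1) (hpd0 : ∀ j, j ≠ i → j ≠ k → pd (X j) = 0)
    (hr : ∀ j g, r (X j * g) = pd (X (Equiv.swap i k j)) * s g - X j * r g)
    (j : Fin n) (g : SkewPoly n) :
    commutatorDefect (X i) (X k) s τi τk r (X j * g)
      = -(τi (X j) * commutatorDefect (X i) (X k) s τi τk r g) := by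
  have hτs : ∀ g, τi (s g) = s (τk g) :=
    AlgHom.congr_fun <| algHom_ext (φ := τi.comp s) (ψ := s.comp τk) fun j => by
      simp only [AlgHom.comp_apply, hs, hτi, hτk, Equiv.swap_apply_eq_iff]
      split_ifs <;> simp_all
  rcases eq_or_ne j i with rfl | hji
  · exact commutatorDefect_xi_mul (X_mul_X_of_ne hik) (by simp [hτi]) (by simp [hτk, hik])
      (by simp [hs]) hτs (fun g => by rw [hr, Equiv.swap_apply_left, hpdk, one_mul]) g
  rcases eq_or_ne j k with rfl | hjk
  · exact commutatorDefect_xk_mul (X_mul_X_of_ne hik) (by simp [hτi, hji]) (by simp [hτk])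
      (by simp [hs]) hτs (fun g => by rw [hr, Equiv.swap_apply_right, hpdi, one_mul]) g
  · have hσj : Equiv.swap i k j = j := Equiv.swap_apply_of_ne_of_ne hji hjk
    exact commutatorDefect_mul_of_anticomm (X_mul_X_of_ne hji) (X_mul_X_of_ne hjk)
      (by simp [hτi, hji]) (by simp [hτk, hjk]) (by rw [hs, hσj])
      (fun g => by rw [hr, hσj, hpd0 j hji hjk, zero_mul, zero_sub]) g

end SkewPoly

theorem stmt8_general (n : ℕ)
    -- `s i k` is the algebra automorphism of `P⁻` swapping `xᵢ` and `x_k`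
    (s : Fin n → Fin n → (SkewPoly n →ₐ[ℂ] SkewPoly n))
    (hs : ∀ i k j : Fin n, i ≠ k → s i k (X j) = X (Equiv.swap i k j))
    -- `τ i` is the algebra automorphism of `P⁻` sending `xᵢ` to `-xᵢ` and fixing the others
    (τ : Fin n → (SkewPoly n →ₐ[ℂ] SkewPoly n))
    (hτ : ∀ i j : Fin n, τ i (X j) = if j = i then -X j else X j)
    -- `pd i k` is the odd divided difference operator `∂_{i,k}`
    (pd : Fin n → Fin n → Module.End ℂ (SkewPoly n))
    (hpdi : ∀ i k : Fin n, i ≠ k → pd i k (X i) = 1)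
    (hpdk : ∀ i k : Fin n, i ≠ k → pd i k (X k) = 1)
    (hpd0 : ∀ i k j : Fin n, i ≠ k → j ≠ i → j ≠ k → pd i k (X j) = 0)
    (hpdL : ∀ i k : Fin n, i ≠ k → ∀ (d : ℕ) (f g : SkewPoly n), IsHomog d f →
      pd i k (f * g) = pd i k f * g + (-1 : ℂ) ^ d • (s i k f * pd i k g))
    -- `r i k = ∂_{i,k} ∘ s_{i,k}`
    (r : Fin n → Fin n → Module.End ℂ (SkewPoly n))
    (hr : ∀ i k : Fin n, i ≠ k → r i k = pd i k ∘ₗ (s i k).toLinearMap)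
    (i k : Fin n) (hik : i ≠ k) (f : SkewPoly n) :
    (X i ^ 2 - X k ^ 2) * (r i k (τ i f) - τ i (r i k f))
      = X i * s i k (τ i f + τ k f) - X k * s i k (τ i f - τ k f) - 2 * (X i * f) := by
  have hsX : ∀ j, s i k (X j) = X (Equiv.swap i k j) := fun j => hs i k j hik
  have hpd : SkewPoly.IsTwistedOddDerivation (s i k) (pd i k) := hpdL i k hik
  have hrapp : ∀ g, r i k g = pd i k (s i k g) := fun g => by rw [hr i k hik]; rfl
  have hr1 : r i k 1 = 0 := by rw [hrapp, map_one, hpd.map_one_eq_zero]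
  have hrX : ∀ j g, r i k (X j * g) = pd i k (X (Equiv.swap i k j)) * s i k g - X j * r i k g :=
    fun j g => by rw [hrapp, hrapp, hpd.map_swap_X_mul hsX]
  have hD : commutatorDefect (X i) (X k) (s i k) (τ i) (τ k) (r i k) = 0 := by
    refine LinearMap.ker_eq_top.mp <| SkewPoly.eq_top_of_one_mem_of_X_mul_mem _
      (commutatorDefect_one _ _ _ _ _ _ hr1) fun j g hg => ?_
    rw [LinearMap.mem_ker] at hg ⊢
    rw [SkewPoly.commutatorDefect_X_mul hik hsX (hτ i) (hτ k) (hpdi i k hik) (hpdk i k hik)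
      (fun j => hpd0 i k j hik) hrX, hg, mul_zero, neg_zero]
  simpa only [commutatorDefect_apply, LinearMap.zero_apply, sub_eq_zero] using
    LinearMap.congr_fun hD f

/-- The commutator of `r_{i,k}` and `τᵢ`:
`(xᵢ² − x_k²)·(r_{i,k}(τᵢf) − τᵢ(r_{i,k}f))
  = xᵢ·s_{i,k}(τᵢf + τ_kf) − x_k·s_{i,k}(τᵢf − τ_kf) − 2xᵢ·f`. -/
theorem stmt8 (n : ℕ) (hn : 2 ≤ n)
    -- `s i k` is the algebra automorphism of `P⁻` swapping `xᵢ` and `x_k`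
    (s : Fin n → Fin n → (SkewPoly n →ₐ[ℂ] SkewPoly n))
    (hs : ∀ i k j : Fin n, i ≠ k → s i k (X j) = X (Equiv.swap i k j))
    -- `τ i` is the algebra automorphism of `P⁻` sending `xᵢ` to `-xᵢ` and fixing the others
    (τ : Fin n → (SkewPoly n →ₐ[ℂ] SkewPoly n))
    (hτ : ∀ i j : Fin n, τ i (X j) = if j = i then -X j else X j)
    -- `pd i k` is the odd divided difference operator `∂_{i,k}`
    (pd : Fin n → Fin n → Module.End ℂ (SkewPoly n))
    (hpdi : ∀ i k : Fin n, i ≠ k → pd i k (X i) = 1)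
    (hpdk : ∀ i k : Fin n, i ≠ k → pd i k (X k) = 1)
    (hpd0 : ∀ i k j : Fin n, i ≠ k → j ≠ i → j ≠ k → pd i k (X j) = 0)
    (hpdL : ∀ i k : Fin n, i ≠ k → ∀ (d : ℕ) (f g : SkewPoly n), IsHomog d f →
      pd i k (f * g) = pd i k f * g + (-1 : ℂ) ^ d • (s i k f * pd i k g))
    -- `r i k = ∂_{i,k} ∘ s_{i,k}`
    (r : Fin n → Fin n → Module.End ℂ (SkewPoly n))
    (hr : ∀ i k : Fin n, i ≠ k → r i k = pd i k ∘ₗ (s i k).toLinearMap)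
    (i k : Fin n) (hik : i ≠ k) (f : SkewPoly n) :
    (X i ^ 2 - X k ^ 2) * (r i k (τ i f) - τ i (r i k f))
      = X i * s i k (τ i f + τ k f) - X k * s i k (τ i f - τ k f) - 2 * (X i * f) :=
  stmt8_general n s hs τ hτ pd hpdi hpdk hpd0 hpdL r hr i k hik f
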